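/- Every (bull, P5)-free graph is AT-free; in particular every (bull, 2K2)-free graph is AT-free. -/

import Mathlib

open SimpleGraph

variable {V : Type*}

/-- The bull: a triangle 0,1,2 with pendant vertices 3 (adjacent to 0) and 4 (adjacent to 1). -/
def bullGraph : SimpleGraph (Fin 5) :=
  SimpleGraph.fromRel (fun i j =>
    (i = 0 ∧ j = 1) ∨ (i = 0 ∧ j = 2) ∨ (i = 1 ∧ j = 2) ∨ (i = 0 ∧ j = 3) ∨ (i = 1 ∧ j = 4))

/-- The graph consisting of two independent edges: 0-1 and 2-3. -/
def twoK2 : SimpleGraph (Fin 4) :=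
  SimpleGraph.fromRel (fun i j => (i = 0 ∧ j = 1) ∨ (i = 2 ∧ j = 3))

/-- `G` has no induced subgraph isomorphic to `H`. -/
def IndFree {W : Type*} (H : SimpleGraph W) (G : SimpleGraph V) : Prop :=
  IsEmpty (H ↪g G)

/-- A graph is chordal if it has no induced cycle of length at least 4. -/
def Chordal (G : SimpleGraph V) : Prop :=
  ∀ n : ℕ, 4 ≤ n → IndFree (cycleGraph n) G

/-- A cap on a hole of length `n`: a cycle on `ZMod n` together with an extra vertex
adjacent to exactly the two adjacent hole vertices `0` and `1`. -/
def capGraph (n : ℕ) : SimpleGraph (Option (ZMod n)) :=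
  SimpleGraph.fromRel (fun a b =>
    match a, b with
    | some i, some j => j = i + 1
    | none, some i => i = 0 ∨ i = 1
    | _, _ => False)

/-- `x` dominates `y`: they are adjacent and every neighbour of `y` other than `x`
is a neighbour of `x`. -/
def Dominates (G : SimpleGraph V) (x y : V) : Prop :=
  G.Adj x y ∧ ∀ z, G.Adj y z → z ≠ x → G.Adj x z

/-- A graph is reducible if some vertex dominates an adjacent vertex. -/
def Reducible (G : SimpleGraph V) : Prop :=
  ∃ x y, Dominates G x y

/-- Two adjacent vertices with the same neighbours other than each other. -/
def TrueTwins (G : SimpleGraph V) (x y : V) : Prop :=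
  G.Adj x y ∧ ∀ z, z ≠ x → z ≠ y → (G.Adj x z ↔ G.Adj y z)

/-- A vertex is simplicial if its neighbourhood induces a clique. -/
def Simplicial (G : SimpleGraph V) (v : V) : Prop :=
  G.IsClique (G.neighborSet v)

/-- A universal vertex is adjacent to all other vertices. -/
def Universal (G : SimpleGraph V) (v : V) : Prop :=
  ∀ w, w ≠ v → G.Adj v w

/-- A graph is biconnected if it is connected and remains connected after
deleting any single vertex. -/
def Biconnected (G : SimpleGraph V) : Prop :=
  G.Connected ∧ ∀ v : V, (G.induce ({v}ᶜ : Set V)).Connected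

/-- A basic (cap-free) graph: a chordal graph, or a biconnected triangle-free graph
together with at most one additional vertex adjacent to all other vertices. -/
def IsBasic (G : SimpleGraph V) : Prop :=
  Chordal G ∨ (Biconnected G ∧ G.CliqueFree 3) ∨
    (∃ v : V, Universal G v ∧ Biconnected (G.induce ({v}ᶜ : Set V)) ∧
      (G.induce ({v}ᶜ : Set V)).CliqueFree 3)

/-- A one-point cutset: a vertex whose removal disconnects the graph. -/
def IsCutVertex (G : SimpleGraph V) (v : V) : Prop :=
  ¬ (G.induce ({v}ᶜ : Set V)).Connected

/-- `C` is (the vertex set of) a connected component of `G - v`. -/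
def IsComponentOf (G : SimpleGraph V) (v : V) (C : Set V) : Prop :=
  v ∉ C ∧ C.Nonempty ∧ (G.induce C).Connected ∧
    ∀ x ∈ C, ∀ y, G.Adj x y → y ≠ v → y ∈ C

/-- An amalgam partition `(K, A1, B1, A2, B2)` of `G`. -/
structure IsAmalgamPartition (G : SimpleGraph V) (K A1 B1 A2 B2 : Set V) : Prop where
  partition : ∀ v : V, (v ∈ K ∧ v ∉ A1 ∧ v ∉ B1 ∧ v ∉ A2 ∧ v ∉ B2) ∨
    (v ∉ K ∧ v ∈ A1 ∧ v ∉ B1 ∧ v ∉ A2 ∧ v ∉ B2) ∨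
    (v ∉ K ∧ v ∉ A1 ∧ v ∈ B1 ∧ v ∉ A2 ∧ v ∉ B2) ∨
    (v ∉ K ∧ v ∉ A1 ∧ v ∉ B1 ∧ v ∈ A2 ∧ v ∉ B2) ∨
    (v ∉ K ∧ v ∉ A1 ∧ v ∉ B1 ∧ v ∉ A2 ∧ v ∈ B2)
  A1_nonempty : A1.Nonempty
  A2_nonempty : A2.Nonempty
  K_clique : G.IsClique K
  side1_big : 2 ≤ (A1 ∪ B1).ncard
  side2_big : 2 ≤ (A2 ∪ B2).ncard
  A1A2_complete : ∀ a1 ∈ A1, ∀ a2 ∈ A2, G.Adj a1 a2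
  KA1_complete : ∀ k ∈ K, ∀ a ∈ A1, G.Adj k a
  KA2_complete : ∀ k ∈ K, ∀ a ∈ A2, G.Adj k a
  B1_sep : ∀ b ∈ B1, ∀ x ∈ A2 ∪ B2, ¬ G.Adj b x
  B2_sep : ∀ b ∈ B2, ∀ x ∈ A1 ∪ B1, ¬ G.Adj b x

/-- A clique cover of `G`: a finite family of cliques covering all vertices. -/
def IsCliqueCover (G : SimpleGraph V) (𝒞 : Finset (Set V)) : Prop :=
  (∀ s ∈ 𝒞, G.IsClique s) ∧ ∀ v : V, ∃ s ∈ 𝒞, v ∈ s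

/-- The clique cover number `θ(G)`. -/
noncomputable def cliqueCoverNumber (G : SimpleGraph V) : ℕ :=
  sInf {n : ℕ | ∃ 𝒞 : Finset (Set V), IsCliqueCover G 𝒞 ∧ 𝒞.card = n}

/-- A matching of `G`: a finite set of edges, pairwise vertex-disjoint. -/
def IsMatching' (G : SimpleGraph V) (M : Finset (Sym2 V)) : Prop :=
  (↑M : Set (Sym2 V)) ⊆ G.edgeSet ∧
    ∀ e ∈ M, ∀ f ∈ M, e ≠ f → ∀ v : V, v ∈ e → v ∉ f

/-- The maximum size `m(G)` of a matching of `G`. -/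
noncomputable def matchingNumber (G : SimpleGraph V) : ℕ :=
  sSup {n : ℕ | ∃ M : Finset (Sym2 V), IsMatching' G M ∧ M.card = n}

/-- An asteroidal triple: a stable triple such that between any two of its vertices
there is a path avoiding the closed neighbourhood of the third. -/
def IsAT (G : SimpleGraph V) (x y z : V) : Prop :=
  x ≠ y ∧ y ≠ z ∧ x ≠ z ∧ ¬ G.Adj x y ∧ ¬ G.Adj y z ∧ ¬ G.Adj x z ∧
    (∃ p : G.Walk x y, ∀ w ∈ p.support, w ≠ z ∧ ¬ G.Adj z w) ∧
    (∃ p : G.Walk y z, ∀ w ∈ p.support, w ≠ x ∧ ¬ G.Adj x w) ∧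
    (∃ p : G.Walk x z, ∀ w ∈ p.support, w ≠ y ∧ ¬ G.Adj y w)

def ATFree (G : SimpleGraph V) : Prop := ¬ ∃ x y z : V, IsAT G x y z

/-! In a `P5`-free graph each of the three paths of an asteroidal triple `x, y, z` can be
shortened to an induced path of length two or three avoiding the neighbourhood of the third
vertex. Two of the three lengths agree, and two such paths of equal length meeting at a vertex
of the triple always span an induced bull or an induced `P5`. -/

section

variable {G : SimpleGraph V}

lemma IndFree.of_embedding {W W' : Type*} {H : SimpleGraph W} {H' : SimpleGraph W'}
    (f : H ↪g H') (h : IndFree H G) : IndFree H' G :=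
  ⟨fun e => h.elim (e.comp f)⟩

/-- `hsep` (no two nonadjacent vertices of `H` share their neighbourhood) makes `f`
injective, so that `f` is an induced copy of `H`. -/
lemma IndFree.false_of_adj_iff {W : Type*} [LinearOrder W] {H : SimpleGraph W}
    (hH : IndFree H G) (f : W → V)
    (hsep : ∀ i j, i ≠ j → H.Adj i j ∨ ∃ k, ¬ (H.Adj i k ↔ H.Adj j k))
    (hf : ∀ i j, i < j → (G.Adj (f i) (f j) ↔ H.Adj i j)) : False := by
  have hf' : ∀ i j, G.Adj (f i) (f j) ↔ H.Adj i j := by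
    intro i j
    rcases lt_trichotomy i j with hij | rfl | hij
    · exact hf i j hij
    · simp
    · rw [G.adj_comm, H.adj_comm]
      exact hf j i hij
  have hinj : Function.Injective f := by
    intro i j hij
    by_contra hne
    rcases hsep i j hne with hadj | ⟨k, hk⟩
    · exact G.irrefl (hij ▸ (hf' i j).mpr hadj)
    · exact hk (by rw [← hf', ← hf', hij])
  exact hH.elim ⟨⟨f, hinj⟩, hf' _ _⟩

lemma IndFree.false_of_induced_pathGraph_five (hP : IndFree (pathGraph 5) G)
    (v₀ v₁ v₂ v₃ v₄ : V)
    (h01 : G.Adj v₀ v₁) (h12 : G.Adj v₁ v₂) (h23 : G.Adj v₂ v₃) (h34 : G.Adj v₃ v₄)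
    (h02 : ¬ G.Adj v₀ v₂) (h03 : ¬ G.Adj v₀ v₃) (h04 : ¬ G.Adj v₀ v₄)
    (h13 : ¬ G.Adj v₁ v₃) (h14 : ¬ G.Adj v₁ v₄) (h24 : ¬ G.Adj v₂ v₄) : False := by
  refine hP.false_of_adj_iff ![v₀, v₁, v₂, v₃, v₄]
    (by simp only [pathGraph_adj]; decide) ?_
  intro i j hij
  fin_cases i <;> fin_cases j <;> simp_all [pathGraph_adj]

lemma IndFree.false_of_induced_bull (hB : IndFree bullGraph G) (t₀ t₁ t₂ p₀ p₁ : V)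
    (h01 : G.Adj t₀ t₁) (h02 : G.Adj t₀ t₂) (h12 : G.Adj t₁ t₂)
    (h0p : G.Adj t₀ p₀) (h1p : G.Adj t₁ p₁)
    (h0p' : ¬ G.Adj t₀ p₁) (h1p' : ¬ G.Adj t₁ p₀)
    (h2p : ¬ G.Adj t₂ p₀) (h2p' : ¬ G.Adj t₂ p₁) (hpp : ¬ G.Adj p₀ p₁) : False := by
  refine hB.false_of_adj_iff ![t₀, t₁, t₂, p₀, p₁]
    (by simp only [bullGraph, fromRel_adj]; set_option synthInstance.maxSize 2000 in decide) ?_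
  intro i j hij
  fin_cases i <;> fin_cases j <;> simp_all [bullGraph]

/-- `ShortPathAvoiding G x y z k`: a path `x - a - y` (`k = 2`) or an induced path
`x - a - b - y` (`k = 3`) whose inner vertices are not adjacent to `z`. -/
inductive ShortPathAvoiding (G : SimpleGraph V) (x y z : V) : ℕ → Prop
  | two (a : V) : ¬ G.Adj z a → G.Adj x a → G.Adj a y → ShortPathAvoiding G x y z 2
  | three (a b : V) : ¬ G.Adj z a → ¬ G.Adj z b → G.Adj x a → G.Adj a b → G.Adj b y →
      ¬ G.Adj x b → ¬ G.Adj a y → ShortPathAvoiding G x y z 3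

lemma ShortPathAvoiding.eq_two_or_eq_three {x y z : V} {k : ℕ}
    (p : ShortPathAvoiding G x y z k) : k = 2 ∨ k = 3 := by
  cases p <;> simp

/-- Shortcut the walk from its far end: an induced `P5` is the only obstruction. -/
lemma IndFree.exists_shortPathAvoiding_of_walk (hP : IndFree (pathGraph 5) G) {x y : V}
    (z : V) (p : G.Walk x y) (hp : ∀ w ∈ p.support, ¬ G.Adj z w) (hxy : ¬ G.Adj x y)
    (hne : x ≠ y) : ∃ k, ShortPathAvoiding G x y z k := by
  induction p with
  | nil => exact absurd rfl hne
  | @cons x a y hxa q ih =>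
    have hza : ¬ G.Adj z a := hp a (by simp)
    by_cases hay : G.Adj a y
    · exact ⟨2, .two a hza hxa hay⟩
    have hane : a ≠ y := by
      rintro rfl
      exact hxy hxa
    obtain ⟨k, q'⟩ := ih (fun w hw => hp w (by simp [hw])) hay hane
    cases q' with
    | two b hzb hab hby =>
      by_cases hxb : G.Adj x b
      · exact ⟨2, .two b hzb hxb hby⟩
      · exact ⟨3, .three a b hza hzb hxa hab hby hxb hay⟩
    | three b c hzb hzc hab hbc hcy hac hby =>
      by_cases hxc : G.Adj x c
      · exact ⟨2, .two c hzc hxc hcy⟩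
      by_cases hxb : G.Adj x b
      · exact ⟨3, .three b c hzb hzc hxb hbc hcy hxc hby⟩
      exact (hP.false_of_induced_pathGraph_five x a b c y hxa hab hbc hcy hxb hxc hxy hac hay
        hby).elim

lemma IsAT.rotate {x y z : V} (h : IsAT G x y z) : IsAT G y z x := by
  obtain ⟨hxy, hyz, hxz, hxy', hyz', hxz', ⟨p, hp⟩, ⟨q, hq⟩, ⟨r, hr⟩⟩ := h
  refine ⟨hyz, hxz.symm, hxy.symm, hyz', fun h => hxz' h.symm, fun h => hxy' h.symm,
    ⟨q, hq⟩, ⟨r.reverse, fun w hw => hr w ?_⟩, ⟨p.reverse, fun w hw => hp w ?_⟩⟩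
  all_goals simpa using hw

lemma IsAT.exists_shortPathAvoiding (hP : IndFree (pathGraph 5) G) {x y z : V}
    (h : IsAT G x y z) : ∃ k, ShortPathAvoiding G x y z k := by
  obtain ⟨hne, -, -, hxy, -, -, ⟨p, hp⟩, -⟩ := h
  exact hP.exists_shortPathAvoiding_of_walk z p (fun w hw => (hp w hw).2) hxy hne

lemma IsAT.false_of_shortPathAvoiding (hB : IndFree bullGraph G)
    (hP : IndFree (pathGraph 5) G) {x y z : V} (h : IsAT G x y z) {k : ℕ}
    (p : ShortPathAvoiding G x y z k) (q : ShortPathAvoiding G y z x k) : False := by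
  obtain ⟨-, -, -, hxy, hyz, hxz, -⟩ := h
  cases p with
  | two a hza hxa hay =>
    cases q with
    | two e hxe hye hez =>
      by_cases hae : G.Adj a e
      · apply hB.false_of_induced_bull a e y x z <;>
          first | assumption | (rw [G.adj_comm]; assumption)
      · apply hP.false_of_induced_pathGraph_five x a y e z <;>
          first | assumption | (rw [G.adj_comm]; assumption)
  | three a b hza hzb hxa hab hby hxb hay =>
    cases q with
    | three e f hxe hxf hye hef hfz hyf hez =>
      by_cases haf : G.Adj a f <;> by_cases hbf : G.Adj b f
      · apply hB.false_of_induced_bull a b f x y <;>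
          first | assumption | (rw [G.adj_comm]; assumption)
      · apply hP.false_of_induced_pathGraph_five z f a b y <;>
          first | assumption | (rw [G.adj_comm]; assumption)
      · apply hP.false_of_induced_pathGraph_five x a b f z <;>
          first | assumption | (rw [G.adj_comm]; assumption)
      by_cases hae : G.Adj a e
      · apply hP.false_of_induced_pathGraph_five z f e a x <;>
          first | assumption | (rw [G.adj_comm]; assumption)
      by_cases hbe : G.Adj b e
      · apply hB.false_of_induced_bull b e y a f <;>
          first | assumption | (rw [G.adj_comm]; assumption)
      · exact hP.false_of_induced_pathGraph_five x a b y e hxa hab hby hye hxb hxy hxe hay hae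
          hbe

theorem ATFree.of_indFree_bull_of_indFree_pathGraph (hB : IndFree bullGraph G)
    (hP : IndFree (pathGraph 5) G) : ATFree G := by
  rintro ⟨x, y, z, h⟩
  obtain ⟨k₁, p₁⟩ := h.exists_shortPathAvoiding hP
  obtain ⟨k₂, p₂⟩ := h.rotate.exists_shortPathAvoiding hP
  obtain ⟨k₃, p₃⟩ := h.rotate.rotate.exists_shortPathAvoiding hP
  by_cases h₁₂ : k₁ = k₂
  · exact h.false_of_shortPathAvoiding hB hP p₁ (h₁₂ ▸ p₂)
  by_cases h₂₃ : k₂ = k₃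
  · exact h.rotate.false_of_shortPathAvoiding hB hP p₂ (h₂₃ ▸ p₃)
  have h₃₁ : k₃ = k₁ := by
    have := p₁.eq_two_or_eq_three
    have := p₂.eq_two_or_eq_three
    have := p₃.eq_two_or_eq_three
    omega
  exact h.rotate.rotate.false_of_shortPathAvoiding hB hP p₃ (h₃₁ ▸ p₁)

end

def twoK2EmbeddingPathGraph : twoK2 ↪g pathGraph 5 where
  toFun := ![0, 1, 3, 4]
  inj' := by decide
  map_rel_iff' := by
    intro i j
    fin_cases i <;> fin_cases j <;> simp [twoK2, pathGraph_adj]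

/-- every (bull, P5)-free graph is AT-free; in particular every
(bull, 2K2)-free graph is AT-free. -/
theorem stmt19 (G : SimpleGraph V) :
    (IndFree bullGraph G → IndFree (SimpleGraph.pathGraph 5) G → ATFree G) ∧
    (IndFree bullGraph G → IndFree twoK2 G → ATFree G) :=
  ⟨ATFree.of_indFree_bull_of_indFree_pathGraph, fun hB hK =>
    ATFree.of_indFree_bull_of_indFree_pathGraph hB (hK.of_embedding twoK2EmbeddingPathGraph)⟩
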